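/- arXiv:2302.00333 — 3 statements merged into one kernel-verified Lean document; each statement's English description precedes it below -/
import Mathlib

section
/- Let μ ≥ 0, and suppose a nonnegative sequence (ε_j)_{j≥0} satisfies ε_j ≤ K a^{√j} for some K > 0 and a ∈ (0,1) (geometric-type decay as arising from τ(j) = O(exp(−c√j))). Then there exist L₁, L₂ ≥ 0 such that Σ_{j≥0} (j+1)^k ε_j ≤ L₁ L₂^k (k!)² for all integers k ≥ 0. -/
open Real

lemma fact_two_mul_le_aux (k : ℕ) :
    Nat.factorial (2 * k) ≤ 4 ^ k * (Nat.factorial k * Nat.factorial k) := by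
  induction k with
  | zero => simp
  | succ k ih =>
    have h1 : 2 * (k + 1) = (2 * k + 1) + 1 := by ring
    rw [h1, Nat.factorial_succ, Nat.factorial_succ, Nat.factorial_succ]
    have h2 : (2 * k + 1 + 1) * (2 * k + 1) ≤ 4 * ((k + 1) * (k + 1)) := by nlinarith
    calc (2 * k + 1 + 1) * ((2 * k + 1) * Nat.factorial (2 * k))
        = ((2 * k + 1 + 1) * (2 * k + 1)) * Nat.factorial (2 * k) := by ring
      _ ≤ (4 * ((k + 1) * (k + 1))) * (4 ^ k * (Nat.factorial k * Nat.factorial k)) :=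
          Nat.mul_le_mul h2 ih
      _ = 4 ^ (k + 1) * ((k + 1) * Nat.factorial k * ((k + 1) * Nat.factorial k)) := by ring

lemma sup_bound_aux (b : ℝ) (hb : 0 < b) (k j : ℕ) :
    ((j : ℝ) + 1) ^ k * Real.exp (-(b * Real.sqrt j)) ≤
      (max 1 (8 / b ^ 2)) ^ k * (Nat.factorial k : ℝ) ^ 2 := by
  set M : ℝ := max 1 (8 / b ^ 2) with hM
  have hM1 : (1 : ℝ) ≤ M := le_max_left _ _
  have hfact1 : (1 : ℝ) ≤ (Nat.factorial k : ℝ) ^ 2 := by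
    have h := Nat.one_le_iff_ne_zero.mpr (Nat.factorial_ne_zero k)
    have h' : (1 : ℝ) ≤ (Nat.factorial k : ℝ) := by exact_mod_cast h
    nlinarith
  rcases Nat.eq_zero_or_pos j with rfl | hj
  · simp only [Nat.cast_zero, Real.sqrt_zero, mul_zero, neg_zero, Real.exp_zero]
    have hMk : (1 : ℝ) ≤ M ^ k := one_le_pow₀ hM1
    calc ((0 : ℝ) + 1) ^ k * 1 = 1 := by norm_num
    _ ≤ M ^ k * (Nat.factorial k : ℝ) ^ 2 := by nlinarith
  · have hj1 : (1 : ℝ) ≤ (j : ℝ) := by exact_mod_cast hj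
    have hsj : 0 ≤ Real.sqrt j := Real.sqrt_nonneg _
    have hx : 0 ≤ b * Real.sqrt j := mul_nonneg hb.le hsj
    have hxe : (b * Real.sqrt j) ^ (2 * k) / (Nat.factorial (2 * k) : ℝ) ≤
        Real.exp (b * Real.sqrt j) := Real.pow_div_factorial_le_exp _ hx _
    have hxpow : (b * Real.sqrt j) ^ (2 * k) = b ^ (2 * k) * (j : ℝ) ^ k := by
      rw [mul_pow]
      congr 1
      rw [pow_mul, Real.sq_sqrt (by positivity : (0:ℝ) ≤ (j:ℝ))]
    rw [hxpow] at hxe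
    have hpos : (0 : ℝ) < b ^ (2 * k) * (j : ℝ) ^ k := by positivity
    have hdivpos : (0 : ℝ) < b ^ (2 * k) * (j : ℝ) ^ k / (Nat.factorial (2 * k) : ℝ) := by
      have := Nat.factorial_pos (2 * k); positivity
    have hexp_le : Real.exp (-(b * Real.sqrt j)) ≤
        (Nat.factorial (2 * k) : ℝ) / (b ^ (2 * k) * (j : ℝ) ^ k) := by
      rw [Real.exp_neg]
      have h := inv_anti₀ hdivpos hxe
      rwa [inv_div] at h
    have hj2 : ((j : ℝ) + 1) ^ k ≤ (2 * (j : ℝ)) ^ k := by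
      apply pow_le_pow_left₀ (by positivity)
      linarith
    have hfle : (Nat.factorial (2 * k) : ℝ) ≤ 4 ^ k * (Nat.factorial k : ℝ) ^ 2 := by
      have := fact_two_mul_le_aux k
      have h := (Nat.cast_le (α := ℝ)).mpr this
      push_cast at h
      nlinarith [h]
    calc ((j : ℝ) + 1) ^ k * Real.exp (-(b * Real.sqrt j))
        ≤ (2 * (j : ℝ)) ^ k * ((Nat.factorial (2 * k) : ℝ) / (b ^ (2 * k) * (j : ℝ) ^ k)) := by
          apply mul_le_mul hj2 hexp_le (Real.exp_nonneg _) (by positivity)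
      _ = (Nat.factorial (2 * k) : ℝ) * (2 ^ k / b ^ (2 * k)) := by
          rw [mul_pow]
          have hjk : ((j : ℝ)) ^ k ≠ 0 := by positivity
          field_simp
      _ ≤ (4 ^ k * (Nat.factorial k : ℝ) ^ 2) * (2 ^ k / b ^ (2 * k)) := by
          apply mul_le_mul_of_nonneg_right hfle (by positivity)
      _ = (8 / b ^ 2) ^ k * (Nat.factorial k : ℝ) ^ 2 := by
          rw [div_pow, pow_mul]
          have : (b ^ 2) ^ k ≠ 0 := by positivity
          field_simp
          rw [← mul_pow]
          norm_num
      _ ≤ M ^ k * (Nat.factorial k : ℝ) ^ 2 := by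
          apply mul_le_mul_of_nonneg_right _ (by positivity)
          exact pow_le_pow_left₀ (by positivity) (le_max_right _ _) k

lemma summable_exp_neg_sqrt_aux (b : ℝ) (hb : 0 < b) :
    Summable fun j : ℕ => Real.exp (-(b * Real.sqrt j)) := by
  set C : ℝ := max 1 (96 / b ^ 4) with hC
  have hC1 : (1 : ℝ) ≤ C := le_max_left _ _
  have hsum : Summable fun j : ℕ => C * (1 / ((j : ℝ) + 1) ^ 2) := by
    have base : Summable fun n : ℕ => 1 / (n : ℝ) ^ 2 :=
      (Real.summable_one_div_nat_pow (p := 2)).mpr one_lt_two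
    have sh : Summable fun n : ℕ => 1 / ((n + 1 : ℕ) : ℝ) ^ 2 :=
      (summable_nat_add_iff (f := fun n : ℕ => 1 / (n : ℝ) ^ 2) 1).2 base
    have sh' : Summable fun n : ℕ => 1 / ((n : ℝ) + 1) ^ 2 := by
      apply sh.congr
      intro n; push_cast; ring
    exact sh'.mul_left C
  apply Summable.of_nonneg_of_le (fun j => Real.exp_nonneg _) _ hsum
  intro j
  rcases Nat.eq_zero_or_pos j with rfl | hj
  · simp only [Nat.cast_zero, Real.sqrt_zero, mul_zero, neg_zero, Real.exp_zero]
    nlinarith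
  · have hj1 : (1 : ℝ) ≤ (j : ℝ) := by exact_mod_cast hj
    have hx : 0 ≤ b * Real.sqrt j := mul_nonneg hb.le (Real.sqrt_nonneg _)
    have hxe : (b * Real.sqrt j) ^ 4 / (Nat.factorial 4 : ℝ) ≤
        Real.exp (b * Real.sqrt j) := Real.pow_div_factorial_le_exp _ hx _
    have hxpow : (b * Real.sqrt j) ^ 4 = b ^ 4 * (j : ℝ) ^ 2 := by
      rw [mul_pow]
      congr 1
      rw [show (4:ℕ) = 2*2 from rfl, pow_mul, Real.sq_sqrt (by positivity : (0:ℝ) ≤ (j:ℝ))]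
    rw [hxpow] at hxe
    norm_num at hxe
    have hdivpos : (0 : ℝ) < b ^ 4 * (j : ℝ) ^ 2 / 24 := by positivity
    have hexp_le : Real.exp (-(b * Real.sqrt j)) ≤ 24 / (b ^ 4 * (j : ℝ) ^ 2) := by
      rw [Real.exp_neg]
      have h := inv_anti₀ hdivpos hxe
      rwa [inv_div] at h
    refine hexp_le.trans ?_
    have hCge : 96 / b ^ 4 ≤ C := le_max_right _ _
    rw [div_le_iff₀ (by positivity), mul_one_div, div_mul_eq_mul_div,
      le_div_iff₀ (by positivity)]
    have h4 : ((j : ℝ) + 1) ^ 2 ≤ 4 * (j : ℝ) ^ 2 := by nlinarith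
    calc (24 : ℝ) * ((j:ℝ)+1)^2 ≤ 24 * (4 * (j:ℝ)^2) := by nlinarith
      _ = (96 / b ^ 4) * (b ^ 4 * (j:ℝ)^2) := by field_simp; ring
      _ ≤ C * (b ^ 4 * (j:ℝ)^2) := by
          apply mul_le_mul_of_nonneg_right hCge (by positivity)

/-- if `ε_j ≤ K a^{√j}` with `K > 0`, `a ∈ (0,1)`, then there are
`L₁, L₂ ≥ 0` with `Σ_{j≥0} (j+1)^k ε_j ≤ L₁ L₂^k (k!)²` for all `k ≥ 0`. -/
theorem geometric_type_decay_condition_A3 (ε : ℕ → ℝ) (K a : ℝ)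
    (hK : 0 < K) (ha0 : 0 < a) (ha1 : a < 1)
    (hε0 : ∀ j, 0 ≤ ε j)
    (hdecay : ∀ j : ℕ, ε j ≤ K * a ^ (Real.sqrt j)) :
    ∃ L₁ L₂ : ℝ, 0 ≤ L₁ ∧ 0 ≤ L₂ ∧ ∀ k : ℕ,
      ∑' j : ℕ, ((j : ℝ) + 1) ^ k * ε j ≤
        L₁ * L₂ ^ k * ((Nat.factorial k : ℝ)) ^ 2 := by
  set c : ℝ := -Real.log a with hc'
  have hc : 0 < c := by
    have := Real.log_neg ha0 ha1
    simp only [hc']; linarith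
  set b : ℝ := c / 2 with hb'
  have hb : 0 < b := by positivity
  have hrw : ∀ j : ℕ, a ^ (Real.sqrt j) =
      Real.exp (-(b * Real.sqrt j)) * Real.exp (-(b * Real.sqrt j)) := by
    intro j
    rw [Real.rpow_def_of_pos ha0, ← Real.exp_add]
    congr 1
    have hla : Real.log a = -(2 * b) := by rw [hb', hc']; ring
    rw [hla]; ring
  set M : ℝ := max 1 (8 / b ^ 2) with hM
  have hS : Summable fun j : ℕ => Real.exp (-(b * Real.sqrt j)) :=
    summable_exp_neg_sqrt_aux b hb
  set S : ℝ := ∑' j : ℕ, Real.exp (-(b * Real.sqrt j)) with hSdef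
  have hS0 : 0 ≤ S := tsum_nonneg fun j => Real.exp_nonneg _
  refine ⟨K * S, M, by positivity, le_trans one_pos.le (le_max_left _ _), fun k => ?_⟩
  have hterm : ∀ j : ℕ, ((j : ℝ) + 1) ^ k * ε j ≤
      (K * M ^ k * (Nat.factorial k : ℝ) ^ 2) * Real.exp (-(b * Real.sqrt j)) := by
    intro j
    calc ((j : ℝ) + 1) ^ k * ε j
        ≤ ((j : ℝ) + 1) ^ k * (K * a ^ (Real.sqrt j)) :=
          mul_le_mul_of_nonneg_left (hdecay j) (by positivity)
      _ = K * ((((j : ℝ) + 1) ^ k * Real.exp (-(b * Real.sqrt j))) *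
            Real.exp (-(b * Real.sqrt j))) := by rw [hrw j]; ring
      _ ≤ K * ((M ^ k * (Nat.factorial k : ℝ) ^ 2) * Real.exp (-(b * Real.sqrt j))) := by
          apply mul_le_mul_of_nonneg_left _ hK.le
          exact mul_le_mul_of_nonneg_right (sup_bound_aux b hb k j) (Real.exp_nonneg _)
      _ = (K * M ^ k * (Nat.factorial k : ℝ) ^ 2) * Real.exp (-(b * Real.sqrt j)) := by
          ring
  have hmaj : Summable fun j : ℕ =>
      (K * M ^ k * (Nat.factorial k : ℝ) ^ 2) * Real.exp (-(b * Real.sqrt j)) :=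
    hS.mul_left _
  have hf : Summable fun j : ℕ => ((j : ℝ) + 1) ^ k * ε j :=
    Summable.of_nonneg_of_le (fun j => mul_nonneg (by positivity) (hε0 j)) hterm hmaj
  calc ∑' j : ℕ, ((j : ℝ) + 1) ^ k * ε j
      ≤ ∑' j : ℕ, (K * M ^ k * (Nat.factorial k : ℝ) ^ 2) * Real.exp (-(b * Real.sqrt j)) :=
        Summable.tsum_le_tsum hterm hf hmaj
    _ = (K * M ^ k * (Nat.factorial k : ℝ) ^ 2) * S := tsum_mul_left
    _ = (K * S) * M ^ k * (Nat.factorial k : ℝ) ^ 2 := by ring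
end

section
/- Let 0 < a < 1 and suppose a nonnegative sequence (α_k)_{k≥1} satisfies α_k ≤ K a^k. Set α = Σ_{k≥1} α_k (assumed finite and positive, α < 1). Then inf_{1 ≤ ι ≤ j} { α^{j/ι} + Σ_{k≥ι+1} α_k } ≤ C exp(−√(log(1/α) · log(1/a) · j)) for all j ≥ 1 and some constant C > 0 depending only on K, a, α. -/
private lemma geometric_inf_bound_aux {x y j : ℝ} (hj : 0 < j)
    (h : j ^ 2 * x < y * j) : x * j ≤ y := by nlinarith

/-- geometric case of the weak-dependence coefficient bound:
if `α_k ≤ K a^k` (`0 < a < 1`) and `α = Σ_{k≥1} α_k ∈ (0,1)`, then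
`inf_{1 ≤ ι ≤ j} {α^{j/ι} + Σ_{k≥ι+1} α_k} ≤ C exp(−√(log(1/α) log(1/a) j))`
for some `C > 0` and all `j ≥ 1`. (Sequences are indexed so that `α_k`,
`k ≥ 1`, is `αseq (k - 1)`.) -/
theorem geometric_inf_bound (αseq : ℕ → ℝ) (K a : ℝ)
    (hK : 0 < K) (ha0 : 0 < a) (ha1 : a < 1)
    (h0 : ∀ k, 0 ≤ αseq k)
    (hdecay : ∀ k : ℕ, αseq k ≤ K * a ^ (k + 1))
    (hsum : Summable αseq)
    (hα0 : 0 < ∑' k, αseq k) (hα1 : ∑' k, αseq k < 1) :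
    ∃ C > 0, ∀ j : ℕ, 1 ≤ j →
      sInf {x : ℝ | ∃ ι : ℕ, 1 ≤ ι ∧ ι ≤ j ∧
          x = (∑' k, αseq k) ^ ((j : ℝ) / ι) + ∑' k : ℕ, αseq (k + ι)} ≤
        C * Real.exp (-Real.sqrt
          (Real.log (1 / ∑' k, αseq k) * Real.log (1 / a) * j)) := by
  set α : ℝ := ∑' k, αseq k with hα_def
  set Lα : ℝ := Real.log (1 / α) with hLα_def
  set La : ℝ := Real.log (1 / a) with hLa_def
  have hLα : 0 < Lα := Real.log_pos (one_lt_one_div hα0 hα1)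
  have hLa : 0 < La := Real.log_pos (one_lt_one_div ha0 ha1)
  have hlogα : Real.log α = -Lα := by
    rw [hLα_def, one_div, Real.log_inv, neg_neg]
  have hloga : Real.log a = -La := by
    rw [hLa_def, one_div, Real.log_inv, neg_neg]
  have h1a : 0 < 1 - a := by linarith
  -- tail bound
  have tail_bound : ∀ ι : ℕ, (∑' k : ℕ, αseq (k + ι)) ≤ K * a ^ (ι + 1) / (1 - a) := by
    intro ι
    have hsumg : Summable (fun k : ℕ => a ^ k) := summable_geometric_of_lt_one ha0.le ha1
    have hsum2 : Summable (fun k : ℕ => K * a ^ (ι + 1) * a ^ k) :=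
      hsumg.mul_left _
    have key : (∑' k : ℕ, αseq (k + ι)) ≤ ∑' k : ℕ, K * a ^ (ι + 1) * a ^ k := by
      refine Summable.tsum_le_tsum (fun k => ?_) ((summable_nat_add_iff ι).2 hsum) hsum2
      have := hdecay (k + ι)
      calc αseq (k + ι) ≤ K * a ^ (k + ι + 1) := this
        _ = K * a ^ (ι + 1) * a ^ k := by ring
    calc (∑' k : ℕ, αseq (k + ι)) ≤ ∑' k : ℕ, K * a ^ (ι + 1) * a ^ k := key
      _ = K * a ^ (ι + 1) * (1 - a)⁻¹ := by
          rw [tsum_mul_left, tsum_geometric_of_lt_one ha0.le ha1]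
      _ = K * a ^ (ι + 1) / (1 - a) := by ring
  -- tail ≤ α
  have tail_le_α : ∀ ι : ℕ, (∑' k : ℕ, αseq (k + ι)) ≤ α := by
    intro ι
    have := Summable.sum_add_tsum_nat_add ι hsum
    have hfin : 0 ≤ ∑ i ∈ Finset.range ι, αseq i :=
      Finset.sum_nonneg fun i _ => h0 i
    rw [hα_def]; linarith
  refine ⟨Real.exp La + K * a / (1 - a) + 2, by positivity, ?_⟩
  intro j hj
  set s : ℝ := Real.sqrt (Lα * La * j) with hs_def
  set r : ℝ := Real.sqrt (Lα * j / La) with hr_def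
  have hjR : (1 : ℝ) ≤ (j : ℝ) := by exact_mod_cast hj
  have hr_pos : 0 < r := Real.sqrt_pos.2 (by positivity)
  have hr_sq : r ^ 2 = Lα * j / La := Real.sq_sqrt (by positivity)
  have hjLα : (j : ℝ) * Lα = r ^ 2 * La := by
    rw [hr_sq]; field_simp
  have hs_eq : s = r * La := by
    rw [hs_def]
    have : Lα * La * j = (r * La) ^ 2 := by
      rw [mul_pow, hr_sq]; field_simp
    rw [this, Real.sqrt_sq (by positivity)]
  have hexp_pos : 0 < Real.exp (-s) := Real.exp_pos _
  -- membership helper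
  have hbdd : BddBelow {x : ℝ | ∃ ι : ℕ, 1 ≤ ι ∧ ι ≤ j ∧
      x = α ^ ((j : ℝ) / ι) + ∑' k : ℕ, αseq (k + ι)} := by
    refine ⟨0, ?_⟩
    rintro x ⟨ι, _, _, rfl⟩
    have h1 : 0 ≤ α ^ ((j : ℝ) / ι) := Real.rpow_nonneg hα0.le _
    have h2 : 0 ≤ ∑' k : ℕ, αseq (k + ι) := tsum_nonneg fun k => h0 _
    linarith
  by_cases hcase : ⌈r⌉₊ ≤ j
  · -- case A: ι = ⌈r⌉₊
    set ι : ℕ := ⌈r⌉₊ with hι_def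
    have hι1 : 1 ≤ ι := Nat.one_le_ceil_iff.2 hr_pos
    have hιpos : (0 : ℝ) < (ι : ℝ) := by exact_mod_cast hι1
    have hr_le : r ≤ (ι : ℝ) := Nat.le_ceil r
    have hι_le : (ι : ℝ) ≤ r + 1 := (Nat.ceil_lt_add_one hr_pos.le).le
    refine le_trans (csInf_le hbdd ⟨ι, hι1, hcase, rfl⟩) ?_
    -- term 1
    have hterm1 : α ^ ((j : ℝ) / ι) ≤ Real.exp La * Real.exp (-s) := by
      rw [Real.rpow_def_of_pos hα0, hlogα, ← Real.exp_add]
      apply Real.exp_le_exp.2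
      have hdiv : (j : ℝ) * Lα / (r + 1) ≤ (j : ℝ) * Lα / ι :=
        div_le_div_of_nonneg_left (by positivity) hιpos hι_le
      have hkey : s - La ≤ (j : ℝ) * Lα / (r + 1) := by
        rw [le_div_iff₀ (by positivity)]
        rw [hs_eq, hjLα]
        nlinarith [hLa.le, hr_pos.le]
      have : -Lα * ((j : ℝ) / ι) = -((j : ℝ) * Lα / ι) := by ring
      rw [this]
      linarith
    -- term 2
    have hterm2 : (∑' k : ℕ, αseq (k + ι)) ≤ K * a / (1 - a) * Real.exp (-s) := by
      refine le_trans (tail_bound ι) ?_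
      have haι : a ^ ι ≤ Real.exp (-s) := by
        have : a ^ ι = Real.exp ((ι : ℝ) * Real.log a) := by
          rw [Real.exp_nat_mul, Real.exp_log ha0]
        rw [this, hloga]
        apply Real.exp_le_exp.2
        rw [hs_eq]
        nlinarith [hLa.le]
      have : K * a ^ (ι + 1) / (1 - a) = K * a / (1 - a) * a ^ ι := by
        rw [pow_succ]; ring
      rw [this]
      have hc : 0 ≤ K * a / (1 - a) := by positivity
      exact mul_le_mul_of_nonneg_left haι hc
    have h2s : 0 ≤ 2 * Real.exp (-s) := by positivity
    calc α ^ ((j : ℝ) / ι) + ∑' k : ℕ, αseq (k + ι)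
        ≤ Real.exp La * Real.exp (-s) + K * a / (1 - a) * Real.exp (-s) := by
          linarith
      _ ≤ (Real.exp La + K * a / (1 - a) + 2) * Real.exp (-s) := by nlinarith
  · -- case B: ι = j
    push_neg at hcase
    refine le_trans (csInf_le hbdd ⟨j, hj, le_refl j, rfl⟩) ?_
    have hjne : (j : ℝ) ≠ 0 := by positivity
    have hpow : α ^ ((j : ℝ) / j) = α := by
      rw [div_self hjne, Real.rpow_one]
    have hjr : (j : ℝ) < r := by
      have h1 : (j : ℝ) + 1 ≤ (⌈r⌉₊ : ℝ) := by exact_mod_cast hcase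
      have h2 : (⌈r⌉₊ : ℝ) < r + 1 := Nat.ceil_lt_add_one hr_pos.le
      linarith
    have hsLα : s ≤ Lα := by
      have hLaj : La * (j : ℝ) ≤ Lα := by
        have hsq : (j : ℝ) ^ 2 < r ^ 2 := by
          apply pow_lt_pow_left₀ hjr (by positivity)
          norm_num
        rw [hr_sq, lt_div_iff₀ hLa] at hsq
        exact geometric_inf_bound_aux (by positivity) hsq
      have : Lα * La * (j : ℝ) ≤ Lα ^ 2 := by
        have h2 := mul_le_mul_of_nonneg_left hLaj hLα.le
        calc Lα * La * (j : ℝ) = Lα * (La * j) := by ring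
          _ ≤ Lα * Lα := h2
          _ = Lα ^ 2 := by ring
      calc s ≤ Real.sqrt (Lα ^ 2) := Real.sqrt_le_sqrt this
        _ = Lα := Real.sqrt_sq hLα.le
    have hα_exp : α = Real.exp (-Lα) := by
      rw [← hlogα, Real.exp_log hα0]
    have hαs : α ≤ Real.exp (-s) := by
      rw [hα_exp]; exact Real.exp_le_exp.2 (by linarith)
    have htail := tail_le_α j
    calc α ^ ((j : ℝ) / j) + ∑' k : ℕ, αseq (k + j)
        ≤ α + α := by rw [hpow]; linarith
      _ ≤ 2 * Real.exp (-s) := by linarith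
      _ ≤ (Real.exp La + K * a / (1 - a) + 2) * Real.exp (-s) := by
          have h3 : 0 ≤ (Real.exp La + K * a / (1 - a)) * Real.exp (-s) := by positivity
          have h4 : (Real.exp La + K * a / (1 - a) + 2) * Real.exp (-s)
              = (Real.exp La + K * a / (1 - a)) * Real.exp (-s) + 2 * Real.exp (-s) := by ring
          rw [h4]; linarith
end

section
/- Let γ > 1 and suppose a nonnegative sequence (α_k)_{k≥1} satisfies α_k ≤ K k^{−γ}, and let α = Σ_{k≥1} α_k ∈ (0,1). Then inf_{1 ≤ ι ≤ j} { α^{j/ι} + Σ_{k≥ι+1} α_k } = O( (log j / j)^{γ−1} ) as j → ∞. -/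
open Filter Finset

/-- MVT step: `(γ-1)(x+1)^{-γ} ≤ x^{1-γ} - (x+1)^{1-γ}` for `x ≥ 1`. -/
lemma rpow_step_aux {γ : ℝ} (hγ : 1 < γ) {x : ℝ} (hx : 1 ≤ x) :
    (γ - 1) * (x + 1) ^ (-γ) ≤ x ^ (1 - γ) - (x + 1) ^ (1 - γ) := by
  have hx0 : (0:ℝ) < x := lt_of_lt_of_le one_pos hx
  have h1 : x < x + 1 := by linarith
  have hexp : (1:ℝ) - γ - 1 = -γ := by ring
  obtain ⟨t, ht, hderiv⟩ :=
    exists_hasDerivAt_eq_slope (fun y : ℝ => y ^ (1 - γ))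
      (fun y : ℝ => (1 - γ) * y ^ (-γ)) h1
      (fun y hy => by
        have hy0 : y ≠ 0 := (lt_of_lt_of_le hx0 hy.1).ne'
        exact (Real.continuousAt_rpow_const y (1 - γ) (Or.inl hy0)).continuousWithinAt)
      (fun y hy => by
        have hy0 : (0:ℝ) < y := lt_trans hx0 hy.1
        have h := Real.hasDerivAt_rpow_const (x := y) (p := 1 - γ) (Or.inl hy0.ne')
        rwa [hexp] at h)
  have ht0 : 0 < t := lt_trans hx0 ht.1
  have hslope : (1 - γ) * t ^ (-γ) = (x + 1) ^ (1 - γ) - x ^ (1 - γ) := by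
    rw [hderiv]; simp
  have hmono : (x + 1) ^ (-γ) ≤ t ^ (-γ) :=
    Real.rpow_le_rpow_of_nonpos ht0 ht.2.le (by linarith)
  have := mul_le_mul_of_nonneg_left hmono (by linarith : (0:ℝ) ≤ γ - 1)
  nlinarith [this, hslope]

/-- Tail bound: `∑_{k≥0} α_{k+ι} ≤ K/(γ-1) · ι^{1-γ}`. -/
lemma tail_bound_aux (αseq : ℕ → ℝ) (K γ : ℝ) (hK : 0 < K) (hγ : 1 < γ)
    (h0 : ∀ k, 0 ≤ αseq k)
    (hdecay : ∀ k : ℕ, αseq k ≤ K * ((k : ℝ) + 1) ^ (-γ))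
    (ι : ℕ) (hι : 1 ≤ ι) :
    ∑' k : ℕ, αseq (k + ι) ≤ K / (γ - 1) * (ι : ℝ) ^ (1 - γ) := by
  have hγ0 : (0:ℝ) < γ - 1 := by linarith
  refine Real.tsum_le_of_sum_range_le (fun k => h0 _) fun N => ?_
  have step : ∀ k : ℕ, αseq (k + ι) ≤
      K / (γ - 1) * (((k + ι : ℕ) : ℝ) ^ (1 - γ) - (((k + ι : ℕ) : ℝ) + 1) ^ (1 - γ)) := by
    intro k
    have hx : (1:ℝ) ≤ ((k + ι : ℕ) : ℝ) := by
      have : (1:ℕ) ≤ k + ι := le_add_of_le_right hι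
      exact_mod_cast this
    have hstep := rpow_step_aux hγ hx
    have hd := hdecay (k + ι)
    calc αseq (k + ι) ≤ K * (((k + ι : ℕ) : ℝ) + 1) ^ (-γ) := hd
      _ = K / (γ - 1) * ((γ - 1) * (((k + ι : ℕ) : ℝ) + 1) ^ (-γ)) := by
          field_simp
      _ ≤ K / (γ - 1) * (((k + ι : ℕ) : ℝ) ^ (1 - γ) - (((k + ι : ℕ) : ℝ) + 1) ^ (1 - γ)) := by
          apply mul_le_mul_of_nonneg_left hstep (le_of_lt (by positivity))
  calc ∑ k ∈ Finset.range N, αseq (k + ι)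
      ≤ ∑ k ∈ Finset.range N,
          K / (γ - 1) * (((k + ι : ℕ) : ℝ) ^ (1 - γ) - (((k + ι : ℕ) : ℝ) + 1) ^ (1 - γ)) :=
        Finset.sum_le_sum fun k _ => step k
    _ = K / (γ - 1) * ∑ k ∈ Finset.range N,
          ((fun m : ℕ => ((m + ι : ℕ) : ℝ) ^ (1 - γ)) k - (fun m : ℕ => ((m + ι : ℕ) : ℝ) ^ (1 - γ)) (k + 1)) := by
        rw [Finset.mul_sum]
        refine Finset.sum_congr rfl fun k _ => ?_
        simp only
        congr 2
        push_cast; ring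
    _ = K / (γ - 1) * (((0 + ι : ℕ) : ℝ) ^ (1 - γ) - ((N + ι : ℕ) : ℝ) ^ (1 - γ)) := by
        rw [Finset.sum_range_sub']
    _ ≤ K / (γ - 1) * (ι : ℝ) ^ (1 - γ) := by
        have h1 : (0:ℝ) ≤ ((N + ι : ℕ) : ℝ) ^ (1 - γ) := by positivity
        have h2 : (0:ℝ) ≤ K / (γ - 1) := le_of_lt (by positivity)
        have : ((0 + ι : ℕ) : ℝ) = (ι : ℝ) := by push_cast; ring
        rw [this]
        nlinarith

/-- Riemanian case of the weak-dependence coefficient bound: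
if `α_k ≤ K k^{−γ}` (`γ > 1`) and `α = Σ_{k≥1} α_k ∈ (0,1)`, then
`inf_{1 ≤ ι ≤ j} {α^{j/ι} + Σ_{k≥ι+1} α_k} = O((log j / j)^{γ−1})` as
`j → ∞`. (Sequences are indexed so that `α_k`, `k ≥ 1`, is `αseq (k - 1)`.) -/
theorem riemannian_inf_bound (αseq : ℕ → ℝ) (K γ : ℝ)
    (hK : 0 < K) (hγ : 1 < γ)
    (h0 : ∀ k, 0 ≤ αseq k)
    (hdecay : ∀ k : ℕ, αseq k ≤ K * ((k : ℝ) + 1) ^ (-γ))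
    (hsum : Summable αseq)
    (hα0 : 0 < ∑' k, αseq k) (hα1 : ∑' k, αseq k < 1) :
    ∃ C > 0, ∃ j₀ : ℕ, ∀ j : ℕ, j ≥ j₀ →
      sInf {x : ℝ | ∃ ι : ℕ, 1 ≤ ι ∧ ι ≤ j ∧
          x = (∑' k, αseq k) ^ ((j : ℝ) / ι) + ∑' k : ℕ, αseq (k + ι)} ≤
        C * (Real.log j / j) ^ (γ - 1) := by
  set α : ℝ := ∑' k, αseq k with hαdef
  have hγ1 : (0:ℝ) < γ - 1 := by linarith
  have hαlog : Real.log α < 0 := Real.log_neg hα0 hα1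
  set L : ℝ := -Real.log α with hLdef
  have hL0 : 0 < L := by simp only [hLdef, neg_pos]; exact hαlog
  set c : ℝ := L / (γ - 1) with hcdef
  have hc0 : 0 < c := div_pos hL0 hγ1
  have hCpos : (0:ℝ) < 1 + K / (γ - 1) * (2 / c) ^ (γ - 1) := by
    have : (0:ℝ) < K / (γ - 1) * (2 / c) ^ (γ - 1) :=
      mul_pos (div_pos hK hγ1) (Real.rpow_pos_of_pos (by positivity) _)
    linarith
  refine ⟨1 + K / (γ - 1) * (2 / c) ^ (γ - 1), hCpos, ?_⟩
  -- eventual conditions on j (as a real)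
  have hev : ∀ᶠ y : ℝ in atTop,
      Real.log y ≤ c / 2 * y ∧ max 1 c ≤ Real.log y ∧ (3:ℝ) ≤ y := by
    have h1 : ∀ᶠ y : ℝ in atTop, ‖Real.log y‖ ≤ c / 2 * ‖y‖ :=
      Real.isLittleO_log_id_atTop.def (by positivity)
    have h2 : ∀ᶠ y : ℝ in atTop, max 1 c ≤ Real.log y :=
      Real.tendsto_log_atTop.eventually_ge_atTop _
    have h3 : ∀ᶠ y : ℝ in atTop, (3:ℝ) ≤ y := eventually_ge_atTop 3
    filter_upwards [h1, h2, h3] with y hy1 hy2 hy3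
    have hly : 0 ≤ Real.log y := le_trans zero_le_one ((le_max_left 1 c).trans hy2)
    have hy0 : (0:ℝ) ≤ y := by linarith
    refine ⟨?_, hy2, hy3⟩
    rwa [Real.norm_eq_abs, Real.norm_eq_abs, abs_of_nonneg hly, abs_of_nonneg hy0] at hy1
  have hevN : ∀ᶠ j : ℕ in atTop,
      Real.log j ≤ c / 2 * j ∧ max 1 c ≤ Real.log j ∧ (3:ℝ) ≤ (j:ℝ) :=
    tendsto_natCast_atTop_atTop.eventually hev
  obtain ⟨j₀, hj₀⟩ := eventually_atTop.1 hevN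
  refine ⟨j₀, fun j hj => ?_⟩
  obtain ⟨hjl, hjmax, hj3⟩ := hj₀ j hj
  have hlj1 : (1:ℝ) ≤ Real.log j := (le_max_left 1 c).trans hjmax
  have hljc : c ≤ Real.log j := (le_max_right 1 c).trans hjmax
  have hlj0 : (0:ℝ) < Real.log j := by linarith
  have hjpos : (0:ℝ) < (j:ℝ) := by linarith
  set x : ℝ := c * j / Real.log j with hxdef
  have hx0 : 0 < x := by positivity
  have hx2 : (2:ℝ) ≤ x := by
    have h1 : c * j / (c / 2 * j) ≤ c * j / Real.log j :=
      div_le_div_of_nonneg_left (by positivity) hlj0 hjl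
    have h2 : c * j / (c / 2 * j) = 2 := by field_simp
    rw [hxdef]; linarith
  set ι : ℕ := ⌊x⌋₊ with hιdef
  have hι1 : 1 ≤ ι := Nat.le_floor (by exact_mod_cast le_trans one_le_two hx2)
  have hιle : (ι:ℝ) ≤ x := Nat.floor_le hx0.le
  have hιge : x / 2 ≤ (ι:ℝ) := by
    have := Nat.sub_one_lt_floor x
    rw [← hιdef] at this
    linarith
  have hιpos : (0:ℝ) < (ι:ℝ) := by
    have : (1:ℝ) ≤ (ι:ℝ) := by exact_mod_cast hι1
    linarith
  have hιj : ι ≤ j := by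
    have h1 : x ≤ c * j / c := div_le_div_of_nonneg_left (by positivity) hc0 hljc
    have h2 : c * j / c = (j:ℝ) := by field_simp
    have : (ι:ℝ) ≤ (j:ℝ) := by linarith
    exact_mod_cast this
  -- the candidate element of the set
  have hmem : α ^ ((j:ℝ) / ι) + ∑' k : ℕ, αseq (k + ι) ∈
      {x : ℝ | ∃ ι : ℕ, 1 ≤ ι ∧ ι ≤ j ∧
        x = α ^ ((j : ℝ) / ι) + ∑' k : ℕ, αseq (k + ι)} := ⟨ι, hι1, hιj, rfl⟩
  have hbdd : BddBelow {x : ℝ | ∃ ι : ℕ, 1 ≤ ι ∧ ι ≤ j ∧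
      x = α ^ ((j : ℝ) / ι) + ∑' k : ℕ, αseq (k + ι)} := by
    refine ⟨0, fun y hy => ?_⟩
    obtain ⟨m, -, -, rfl⟩ := hy
    have h1 : (0:ℝ) ≤ α ^ ((j:ℝ) / m) := Real.rpow_nonneg hα0.le _
    have h2 : (0:ℝ) ≤ ∑' k : ℕ, αseq (k + m) := tsum_nonneg fun k => h0 _
    linarith
  refine le_trans (csInf_le hbdd hmem) ?_
  -- geometric term bound
  have hjx : (j:ℝ) / x = Real.log j / c := by
    rw [hxdef]; field_simp
  have hexp : Real.log j / c ≤ (j:ℝ) / ι := by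
    rw [← hjx]
    exact div_le_div_of_nonneg_left hjpos.le hιpos hιle
  have hgeo : α ^ ((j:ℝ) / ι) ≤ (Real.log j / j) ^ (γ - 1) := by
    have h1 : α ^ ((j:ℝ) / ι) ≤ α ^ (Real.log j / c) :=
      Real.rpow_le_rpow_of_exponent_ge hα0 hα1.le hexp
    have h2 : α ^ (Real.log j / c) = (j:ℝ) ^ (-(γ - 1)) := by
      rw [Real.rpow_def_of_pos hα0, Real.rpow_def_of_pos hjpos]
      congr 1
      have hlα : Real.log α = -L := by rw [hLdef]; ring
      rw [hlα, hcdef]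
      field_simp
    have h3 : (j:ℝ) ^ (-(γ - 1)) = (1 / (j:ℝ)) ^ (γ - 1) := by
      rw [one_div, Real.inv_rpow hjpos.le, Real.rpow_neg hjpos.le]
    have h4 : (1 / (j:ℝ)) ^ (γ - 1) ≤ (Real.log j / j) ^ (γ - 1) := by
      apply Real.rpow_le_rpow (by positivity) _ hγ1.le
      gcongr
    calc α ^ ((j:ℝ) / ι) ≤ α ^ (Real.log j / c) := h1
      _ = (1 / (j:ℝ)) ^ (γ - 1) := by rw [h2, h3]
      _ ≤ (Real.log j / j) ^ (γ - 1) := h4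
  -- tail term bound
  have htail : ∑' k : ℕ, αseq (k + ι) ≤
      K / (γ - 1) * (2 / c) ^ (γ - 1) * (Real.log j / j) ^ (γ - 1) := by
    have h1 : ∑' k : ℕ, αseq (k + ι) ≤ K / (γ - 1) * (ι:ℝ) ^ (1 - γ) :=
      tail_bound_aux αseq K γ hK hγ h0 hdecay ι hι1
    have h2 : (ι:ℝ) ^ (1 - γ) ≤ (x / 2) ^ (1 - γ) :=
      Real.rpow_le_rpow_of_nonpos (by positivity) hιge (by linarith)
    have h3 : (x / 2) ^ (1 - γ) = (2 / c) ^ (γ - 1) * (Real.log j / j) ^ (γ - 1) := by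
      have hx2c : (2:ℝ) / x = 2 / c * (Real.log j / j) := by
        rw [hxdef]; field_simp
      have : (1:ℝ) - γ = -(γ - 1) := by ring
      rw [this, Real.rpow_neg (by positivity), ← Real.inv_rpow (by positivity),
        inv_div, hx2c, Real.mul_rpow (by positivity) (by positivity)]
    have h4 : (0:ℝ) ≤ K / (γ - 1) := le_of_lt (by positivity)
    calc ∑' k : ℕ, αseq (k + ι) ≤ K / (γ - 1) * (ι:ℝ) ^ (1 - γ) := h1
      _ ≤ K / (γ - 1) * (x / 2) ^ (1 - γ) := mul_le_mul_of_nonneg_left h2 h4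
      _ = K / (γ - 1) * (2 / c) ^ (γ - 1) * (Real.log j / j) ^ (γ - 1) := by
          rw [h3]; ring
  linarith [hgeo, htail]
end
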